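/- Let k ∈ ℕ, let φ ∈ SL∪{*} and ψ ∈ SL, and suppose φ ⊢_k ψ. Then for every {ψ}-maximal tree T_k of depth k rooted in φ which is free of deep contradictions, every leaf α ∈ Le(T_k) satisfies α ⊢_0 ψ. -/
import Mathlib


/-!
Common framework: Depth-Bounded Boolean Logics, depth-bounded trees/forests,
mass functions and depth-bounded belief functions.
-/

namespace DBB

/-- Sentences of a propositional language with propositional variables in `V`,
connectives ¬, ∧, ∨ and the constant ⊥. -/
inductive Sentence (V : Type) : Type
  | var  : V → Sentence V
  | bot  : Sentence V
  | neg  : Sentence V → Sentence V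
  | conj : Sentence V → Sentence V → Sentence V
  | disj : Sentence V → Sentence V → Sentence V
  deriving DecidableEq

variable {V : Type}

/-- Boolean evaluation of a sentence under a valuation of the variables. -/
def eval (v : V → Bool) : Sentence V → Bool
  | .var p => v p
  | .bot => false
  | .neg φ => !(eval v φ)
  | .conj φ ψ => eval v φ && eval v ψ
  | .disj φ ψ => eval v φ || eval v ψ

/-- Classical (semantic) consequence `Γ ⊢ φ`. -/
def CC (Γ : Set (Sentence V)) (φ : Sentence V) : Prop :=
  ∀ v : V → Bool, (∀ γ ∈ Γ, eval v γ = true) → eval v φ = true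

/-- The 0-depth consequence relation `Γ ⊢₀ φ`: closure of `Γ` under the standard
introduction and elimination rules for ¬, ∧, ∨, ⊥. -/
inductive Der0 : Set (Sentence V) → Sentence V → Prop
  | prem {Γ : Set (Sentence V)} {φ} (h : φ ∈ Γ) : Der0 Γ φ
  | andI {Γ φ ψ} : Der0 Γ φ → Der0 Γ ψ → Der0 Γ (.conj φ ψ)
  | andE1 {Γ φ ψ} : Der0 Γ (.conj φ ψ) → Der0 Γ φ
  | andE2 {Γ φ ψ} : Der0 Γ (.conj φ ψ) → Der0 Γ ψ
  | orI1 {Γ φ ψ} : Der0 Γ φ → Der0 Γ (.disj φ ψ)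
  | orI2 {Γ φ ψ} : Der0 Γ ψ → Der0 Γ (.disj φ ψ)
  | orE1 {Γ φ ψ} : Der0 Γ (.disj φ ψ) → Der0 Γ (.neg φ) → Der0 Γ ψ
  | orE2 {Γ φ ψ} : Der0 Γ (.disj φ ψ) → Der0 Γ (.neg ψ) → Der0 Γ φ
  | negAndI1 {Γ φ ψ} : Der0 Γ (.neg φ) → Der0 Γ (.neg (.conj φ ψ))
  | negAndI2 {Γ φ ψ} : Der0 Γ (.neg ψ) → Der0 Γ (.neg (.conj φ ψ))
  | negAndE1 {Γ φ ψ} : Der0 Γ (.neg (.conj φ ψ)) → Der0 Γ φ → Der0 Γ (.neg ψ)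
  | negAndE2 {Γ φ ψ} : Der0 Γ (.neg (.conj φ ψ)) → Der0 Γ ψ → Der0 Γ (.neg φ)
  | negOrI {Γ φ ψ} : Der0 Γ (.neg φ) → Der0 Γ (.neg ψ) → Der0 Γ (.neg (.disj φ ψ))
  | negOrE1 {Γ φ ψ} : Der0 Γ (.neg (.disj φ ψ)) → Der0 Γ (.neg φ)
  | negOrE2 {Γ φ ψ} : Der0 Γ (.neg (.disj φ ψ)) → Der0 Γ (.neg ψ)
  | dnI {Γ φ} : Der0 Γ φ → Der0 Γ (.neg (.neg φ))
  | dnE {Γ φ} : Der0 Γ (.neg (.neg φ)) → Der0 Γ φ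
  | botI {Γ φ} : Der0 Γ φ → Der0 Γ (.neg φ) → Der0 Γ .bot
  | botE {Γ φ} : Der0 Γ .bot → Der0 Γ φ

/-- The set of subsentences of a sentence. -/
def subs : Sentence V → Set (Sentence V)
  | .var p => {Sentence.var p}
  | .bot => {Sentence.bot}
  | .neg φ => insert (.neg φ) (subs φ)
  | .conj φ ψ => insert (.conj φ ψ) (subs φ ∪ subs ψ)
  | .disj φ ψ => insert (.disj φ ψ) (subs φ ∪ subs ψ)

/-- Subsentences of a set of sentences. -/
def subsSet (Γ : Set (Sentence V)) : Set (Sentence V) := ⋃ γ ∈ Γ, subs γ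

/-- The k-depth consequence relations `Γ ⊢ₖ φ`: for `k > 0`, `Γ ⊢ₖ φ` iff there is a
subsentence `β` of `Γ ∪ {φ}` such that `Γ, β ⊢_{k-1} φ` and `Γ, ¬β ⊢_{k-1} φ`. -/
def DerK : ℕ → Set (Sentence V) → Sentence V → Prop
  | 0, Γ, φ => Der0 Γ φ
  | k+1, Γ, φ => ∃ β, β ∈ subsSet (insert φ Γ) ∧
      DerK k (insert β Γ) φ ∧ DerK k (insert (Sentence.neg β) Γ) φ

/-- Elements of `SL ∪ {*}`: `none` is the empty information `*`, `some γ` is the sentence `γ`.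
`prems` gives the corresponding set of premises. -/
def prems : Option (Sentence V) → Set (Sentence V)
  | none => ∅
  | some γ => {γ}

/-- `r ⊢₀ φ` for `r ∈ SL ∪ {*}`. -/
def Der0O (r : Option (Sentence V)) (φ : Sentence V) : Prop := Der0 (prems r) φ

/-- `r ⊢ₖ φ` for `r ∈ SL ∪ {*}`. -/
def DerKO (k : ℕ) (r : Option (Sentence V)) (φ : Sentence V) : Prop := DerK k (prems r) φ

/-- classical consequence from `r ∈ SL ∪ {*}`. -/
def CCO (r : Option (Sentence V)) (φ : Sentence V) : Prop := CC (prems r) φ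

/-- `r ⊢₀ s` where also the conclusion may be the empty information `*`
(deriving `*` is trivial). -/
def Der0OO (r : Option (Sentence V)) : Option (Sentence V) → Prop
  | none => True
  | some φ => Der0O r φ

/-! ### Depth-bounded trees -/

/-- Binary trees whose internal nodes are labelled by the branching sentence `β`:
a node with branching sentence `β` and current information `α` has children carrying
the information `α ∧ β` and `α ∧ ¬β` respectively. -/
inductive DBTree (V : Type) : Type
  | leaf : DBTree V
  | node : Sentence V → DBTree V → DBTree V → DBTree V
  deriving DecidableEq

/-- The information carried by a child of a node with information `r ∈ SL ∪ {*}` and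
branching sentence `β`: `r ∧ β` (or just `β` when `r = *`). -/
def extend (r : Option (Sentence V)) (β : Sentence V) : Option (Sentence V) :=
  some (match r with
    | none => β
    | some α => Sentence.conj α β)

/-- The set `Le(T)` of labels of the leaves of a tree `t` rooted in `r ∈ SL ∪ {*}`. -/
def leafLabels [DecidableEq V] : Option (Sentence V) → DBTree V → Finset (Option (Sentence V))
  | r, .leaf => {r}
  | r, .node β t₁ t₂ =>
      leafLabels (extend r β) t₁ ∪ leafLabels (extend r (.neg β)) t₂

/-- The number of leaves of a tree. -/
def numLeaves : DBTree V → ℕ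
  | .leaf => 1
  | .node _ t₁ t₂ => numLeaves t₁ + numLeaves t₂

/-- `Grow k t t'`: `t'` is obtained from `t` by expanding a (possibly empty) subset of the
depth-`k` leaves of `t`, each expanded leaf getting two children via some branching sentence. -/
inductive Grow : ℕ → DBTree V → DBTree V → Prop
  | keep (k : ℕ) : Grow k .leaf .leaf
  | expand (β : Sentence V) : Grow 0 .leaf (.node β .leaf .leaf)
  | node {k : ℕ} {t₁ t₁' t₂ t₂' : DBTree V} (β : Sentence V) :
      Grow k t₁ t₁' → Grow k t₂ t₂' →
      Grow (k+1) (.node β t₁ t₂) (.node β t₁' t₂')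

/-- A depth-bounded tree sequence (DBT-sequence): `T₀` is a single node, and `T_{k+1}` is
obtained from `T_k` by branching at least one node of depth `k`. -/
structure DBTSeq (V : Type) where
  tree : ℕ → DBTree V
  init : tree 0 = DBTree.leaf
  grow : ∀ k, Grow k (tree k) (tree (k+1))
  progress : ∀ k, tree (k+1) ≠ tree k

/-- `t` is a tree of depth `k` belonging to some DBT-sequence. -/
def IsDepthKTree (k : ℕ) (t : DBTree V) : Prop := ∃ S : DBTSeq V, S.tree k = t

/-- `r` decides `φ`: `r ⊢₀ φ` or `r ⊢₀ ¬φ`. -/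
def Decides (r : Option (Sentence V)) (φ : Sentence V) : Prop :=
  Der0O r φ ∨ Der0O r (.neg φ)

/-- `|dec(Γ, φ)|`: the number of elements of `Γ` deciding `φ`. -/
noncomputable def decCount [DecidableEq V] (Γ : Finset (Option (Sentence V)))
    (φ : Sentence V) : ℕ := by
  classical exact (Γ.filter (fun α => Decides α φ)).card

/-- A tree rooted in `r` is `{φ}`-closed iff all its leaves decide `φ`. -/
def TreeClosed [DecidableEq V] (r : Option (Sentence V)) (t : DBTree V) (φ : Sentence V) : Prop :=
  ∀ α ∈ leafLabels r t, Decides α φ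

/-- A tree `t` of depth `k` rooted in `r` is `{φ}`-maximal iff no depth-`k` tree with the same
root has strictly more leaves deciding `φ`. -/
def TreeMaximal [DecidableEq V] (r : Option (Sentence V)) (k : ℕ) (t : DBTree V)
    (φ : Sentence V) : Prop :=
  ∀ t' : DBTree V, IsDepthKTree k t' →
    decCount (leafLabels r t') φ ≤ decCount (leafLabels r t) φ

/-- A tree rooted in `r` is free of deep contradictions iff every classically inconsistent
leaf is already 0-depth inconsistent. -/
def TreeFreeDC [DecidableEq V] (r : Option (Sentence V)) (t : DBTree V) : Prop :=
  ∀ α ∈ leafLabels r t, CCO α Sentence.bot → Der0O α Sentence.bot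

/-! ### Depth-bounded forests -/

/-- A depth-bounded forest sequence (DBF-sequence) based on the support set
`Supp ⊆ SL ∪ {*}`: a DBT-sequence rooted in `γ` for each `γ ∈ Supp`. -/
structure DBFSeq (V : Type) where
  Supp : Finset (Option (Sentence V))
  suppNE : Supp.Nonempty
  tree : Option (Sentence V) → ℕ → DBTree V
  init : ∀ γ ∈ Supp, tree γ 0 = DBTree.leaf
  grow : ∀ γ ∈ Supp, ∀ k, Grow k (tree γ k) (tree γ (k+1))
  progress : ∀ γ ∈ Supp, ∀ k, tree γ (k+1) ≠ tree γ k

/-- `Le(F_k)`: the leaves of the depth-`k` forest of a DBF-sequence. -/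
noncomputable def DBFSeq.leaves [DecidableEq V] (F : DBFSeq V) (k : ℕ) :
    Finset (Option (Sentence V)) := by
  classical exact F.Supp.biUnion (fun γ => leafLabels γ (F.tree γ k))

/-- The depth-`k` forest is `{φ}`-closed (tree-wise). -/
def DBFSeq.Closed [DecidableEq V] (F : DBFSeq V) (k : ℕ) (φ : Sentence V) : Prop :=
  ∀ γ ∈ F.Supp, TreeClosed γ (F.tree γ k) φ

/-- The depth-`k` forest is `{φ}`-maximal (tree-wise). -/
def DBFSeq.Maximal [DecidableEq V] (F : DBFSeq V) (k : ℕ) (φ : Sentence V) : Prop :=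
  ∀ γ ∈ F.Supp, TreeMaximal γ k (F.tree γ k) φ

/-- The depth-`k` forest is free of deep contradictions (tree-wise). -/
def DBFSeq.FreeDC [DecidableEq V] (F : DBFSeq V) (k : ℕ) : Prop :=
  ∀ γ ∈ F.Supp, TreeFreeDC γ (F.tree γ k)

/-- `MassStep m m' r t t'`: the mass function `m'` refines `m` along the expansion of `t`
into `t'` (leaves keep their mass; the mass of an expanded leaf is split among its
two children). -/
inductive MassStep (m m' : Option (Sentence V) → ℝ) :
    Option (Sentence V) → DBTree V → DBTree V → Prop
  | keep {r : Option (Sentence V)} :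
      m' r = m r → MassStep m m' r .leaf .leaf
  | split {r : Option (Sentence V)} {β : Sentence V} :
      m' (extend r β) + m' (extend r (.neg β)) = m r →
      MassStep m m' r .leaf (.node β .leaf .leaf)
  | node {r : Option (Sentence V)} {β : Sentence V} {t₁ t₁' t₂ t₂' : DBTree V} :
      MassStep m m' (extend r β) t₁ t₁' →
      MassStep m m' (extend r (.neg β)) t₂ t₂' →
      MassStep m m' r (.node β t₁ t₂) (.node β t₁' t₂')

/-- A depth-bounded mass sequence (DBM-sequence): a DBF-sequence free of deep contradictions
together with probability mass functions `m_k` over `Le(F_k)` such that the mass of each leaf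
of `F_k` is either kept (if it remains a leaf) or split among its two children in `F_{k+1}`. -/
structure DBMSeq (V : Type) [DecidableEq V] extends DBFSeq V where
  m : ℕ → Option (Sentence V) → ℝ
  nonneg : ∀ k, ∀ α ∈ toDBFSeq.leaves k, 0 ≤ m k α
  total : ∀ k, ∑ α ∈ toDBFSeq.leaves k, m k α = 1
  incZero : ∀ k, ∀ α ∈ toDBFSeq.leaves k, Der0O α Sentence.bot → m k α = 0
  freeDC : ∀ k, toDBFSeq.FreeDC k
  massStep : ∀ γ ∈ toDBFSeq.Supp, ∀ k,
      MassStep (m k) (m (k+1)) γ (toDBFSeq.tree γ k) (toDBFSeq.tree γ (k+1))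

/-- The k-depth belief function `B_k(φ) = m_k(b_k(φ))` where
`b_k(φ) = {α ∈ Le(F_k) : α ⊢₀ φ, α ⊬₀ ⊥}`. -/
noncomputable def DBMSeq.B [DecidableEq V] (M : DBMSeq V) (k : ℕ) (φ : Sentence V) : ℝ := by
  classical exact ∑ α ∈ M.toDBFSeq.leaves k,
    if Der0O α φ ∧ ¬ Der0O α Sentence.bot then M.m k α else 0

/-- The k-depth plausibility function `Pl_k(φ) = m_k(pl_k(φ))` where
`pl_k(φ) = {α ∈ Le(F_k) : α ⊬₀ ¬φ}`. -/
noncomputable def DBMSeq.Pl [DecidableEq V] (M : DBMSeq V) (k : ℕ) (φ : Sentence V) : ℝ := by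
  classical exact ∑ α ∈ M.toDBFSeq.leaves k,
    if ¬ Der0O α (Sentence.neg φ) then M.m k α else 0

/-! ### Auxiliary notions -/

/-- A probability function on `SL`: a `[0,1]`-valued function which is normalised on
classical tautologies and additive on classically incompatible disjuncts. -/
def IsProbability (P : Sentence V → ℝ) : Prop :=
  (∀ φ, 0 ≤ P φ ∧ P φ ≤ 1) ∧
  (∀ φ, CC (∅ : Set (Sentence V)) φ → P φ = 1) ∧
  (∀ φ ψ, CC (∅ : Set (Sentence V)) (.neg (.conj φ ψ)) →
    P (.disj φ ψ) = P φ + P ψ)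

/-- The literal on `p` prescribed by the valuation `v`. -/
def litOf (v : V → Bool) (p : V) : Sentence V :=
  if v p then .var p else .neg (.var p)

/-- Left-associated conjunction `φ ∧ ψ₁ ∧ ⋯ ∧ ψₙ`. -/
def listConj : Sentence V → List (Sentence V) → Sentence V
  | φ, [] => φ
  | φ, ψ :: l => listConj (.conj φ ψ) l

/-- Left-associated disjunction `φ ∨ ψ₁ ∨ ⋯ ∨ ψₙ`. -/
def listDisj : Sentence V → List (Sentence V) → Sentence V
  | φ, [] => φ
  | φ, ψ :: l => listDisj (.disj φ ψ) l

/-- Conjunction of a list of sentences (`⊥` for the empty list, which is never used). -/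
def conjList : List (Sentence V) → Sentence V
  | [] => .bot
  | ψ :: l => listConj ψ l

/-- Disjunction of a list of sentences (`⊥` for the empty list, which is never used). -/
def disjList : List (Sentence V) → Sentence V
  | [] => .bot
  | ψ :: l => listDisj ψ l

/-- `α` is an atom of the language: a maximal (classically consistent) conjunction of
literals, with exactly one literal per propositional variable. -/
def IsAtom (α : Sentence V) : Prop :=
  ∃ (v : V → Bool) (l : List V), l.Nodup ∧ (∀ p : V, p ∈ l) ∧ l ≠ [] ∧
    α = conjList (l.map (litOf v))

/-- The conjunction `⋀_{i ∈ S} φ_i` of a finite set of indexed sentences. -/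
def finsetConj {n : ℕ} (φ : Fin n → Sentence V) (S : Finset (Fin n)) : Sentence V :=
  conjList ((S.sort (· ≤ ·)).map φ)

/-- The finite set of subsentences of a sentence. -/
def subsF [DecidableEq V] : Sentence V → Finset (Sentence V)
  | .var p => {Sentence.var p}
  | .bot => {Sentence.bot}
  | .neg φ => insert (.neg φ) (subsF φ)
  | .conj φ ψ => insert (.conj φ ψ) (subsF φ ∪ subsF ψ)
  | .disj φ ψ => insert (.disj φ ψ) (subsF φ ∪ subsF ψ)

/-- All branching sentences of the tree belong to `S`. -/
def BranchesIn [DecidableEq V] : DBTree V → Finset (Sentence V) → Prop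
  | .leaf, _ => True
  | .node β t₁ t₂, S => β ∈ S ∧ BranchesIn t₁ S ∧ BranchesIn t₂ S



/-! ### Auxiliary lemmas for Statement 2 -/

section Aux

variable {V : Type}

/-- Cut for `Der0`. -/
theorem der0_cut {Γ Δ : Set (Sentence V)} {φ : Sentence V} (h : Der0 Γ φ)
    (hΓ : ∀ γ ∈ Γ, Der0 Δ γ) : Der0 Δ φ := by
  induction h with
  | prem h => exact hΓ _ h
  | andI _ _ ih1 ih2 => exact .andI ih1 ih2
  | andE1 _ ih => exact .andE1 ih
  | andE2 _ ih => exact .andE2 ih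
  | orI1 _ ih => exact .orI1 ih
  | orI2 _ ih => exact .orI2 ih
  | orE1 _ _ ih1 ih2 => exact .orE1 ih1 ih2
  | orE2 _ _ ih1 ih2 => exact .orE2 ih1 ih2
  | negAndI1 _ ih => exact .negAndI1 ih
  | negAndI2 _ ih => exact .negAndI2 ih
  | negAndE1 _ _ ih1 ih2 => exact .negAndE1 ih1 ih2
  | negAndE2 _ _ ih1 ih2 => exact .negAndE2 ih1 ih2
  | negOrI _ _ ih1 ih2 => exact .negOrI ih1 ih2
  | negOrE1 _ ih => exact .negOrE1 ih
  | negOrE2 _ ih => exact .negOrE2 ih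
  | dnI _ ih => exact .dnI ih
  | dnE _ ih => exact .dnE ih
  | botI _ _ ih1 ih2 => exact .botI ih1 ih2
  | botE _ ih => exact .botE ih

theorem der0_mono {Γ Δ : Set (Sentence V)} {φ : Sentence V} (h : Der0 Γ φ)
    (hs : Γ ⊆ Δ) : Der0 Δ φ :=
  der0_cut h (fun γ hγ => .prem (hs hγ))

theorem subsSet_insert (a : Sentence V) (Γ : Set (Sentence V)) :
    subsSet (insert a Γ) = subs a ∪ subsSet Γ := by
  simp [subsSet]

/-- Transport of `DerK` along mutual 0-derivability with subsentence inclusion. -/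
theorem derK_transport : ∀ (k : ℕ) {Γ Δ : Set (Sentence V)} {φ : Sentence V},
    DerK k Γ φ → (∀ γ ∈ Γ, Der0 Δ γ) → subsSet Γ ⊆ subsSet Δ → DerK k Δ φ
  | 0, _, _, _, h, hΓ, _ => der0_cut h hΓ
  | k+1, Γ, Δ, φ, ⟨β, hβ, h1, h2⟩, hΓ, hsub => by
    refine ⟨β, ?_, ?_, ?_⟩
    · rw [subsSet_insert] at hβ ⊢
      exact Set.union_subset_union_right _ hsub hβ
    · refine derK_transport k h1 ?_ ?_
      · rintro γ (rfl | hγ)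
        · exact .prem (Set.mem_insert _ _)
        · exact der0_mono (hΓ _ hγ) (Set.subset_insert _ _)
      · rw [subsSet_insert, subsSet_insert]
        exact Set.union_subset_union_right _ hsub
    · refine derK_transport k h2 ?_ ?_
      · rintro γ (rfl | hγ)
        · exact .prem (Set.mem_insert _ _)
        · exact der0_mono (hΓ _ hγ) (Set.subset_insert _ _)
      · rw [subsSet_insert, subsSet_insert]
        exact Set.union_subset_union_right _ hsub

/-- Full binary trees of a given depth. -/
inductive IsFull : ℕ → DBTree V → Prop
  | leaf : IsFull 0 .leaf
  | node {k : ℕ} {t₁ t₂ : DBTree V} (β : Sentence V) :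
      IsFull k t₁ → IsFull k t₂ → IsFull (k+1) (.node β t₁ t₂)

def balanced : ℕ → DBTree V
  | 0 => .leaf
  | k+1 => .node .bot (balanced k) (balanced k)

theorem balanced_ne : ∀ k, (balanced (k+1) : DBTree V) ≠ balanced k
  | 0 => by simp [balanced]
  | k+1 => by
      intro h
      exact balanced_ne k (by injection h)

theorem grow_balanced : ∀ k, Grow k (balanced k : DBTree V) (balanced (k+1))
  | 0 => .expand .bot
  | k+1 => .node .bot (grow_balanced k) (grow_balanced k)

theorem isDepthK_leaf : IsDepthKTree 0 (.leaf : DBTree V) :=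
  ⟨⟨balanced, rfl, grow_balanced, balanced_ne⟩, rfl⟩

theorem isDepthK_node {k : ℕ} {t₁ t₂ : DBTree V} (β : Sentence V)
    (h₁ : IsDepthKTree k t₁) (h₂ : IsDepthKTree k t₂) :
    IsDepthKTree (k+1) (.node β t₁ t₂) := by
  obtain ⟨S₁, h1⟩ := h₁
  obtain ⟨S₂, h2⟩ := h₂
  refine ⟨⟨fun j => match j with
      | 0 => .leaf
      | j+1 => .node β (S₁.tree j) (S₂.tree j), rfl, ?_, ?_⟩, by simp [h1, h2]⟩
  · intro j
    match j with
    | 0 =>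
      show Grow 0 .leaf (.node β (S₁.tree 0) (S₂.tree 0))
      rw [S₁.init, S₂.init]
      exact .expand β
    | j+1 => exact .node β (S₁.grow j) (S₂.grow j)
  · intro j
    match j with
    | 0 => simp
    | j+1 =>
      intro hEq
      exact S₁.progress j (by injection hEq)

theorem grow_numLeaves {k : ℕ} {t t' : DBTree V} (h : Grow k t t') :
    numLeaves t' ≤ 2 * numLeaves t := by
  induction h with
  | keep => simp [numLeaves]
  | expand => simp [numLeaves]
  | node β _ _ ih1 ih2 => simp only [numLeaves]; omega

theorem seq_numLeaves (S : DBTSeq V) : ∀ k, numLeaves (S.tree k) ≤ 2^k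
  | 0 => by rw [S.init]; simp [numLeaves]
  | k+1 => by
      have h1 := grow_numLeaves (S.grow k)
      have h2 := seq_numLeaves S k
      have : (2:ℕ)^(k+1) = 2 * 2^k := by ring
      omega

theorem card_leafLabels_le [DecidableEq V] :
    ∀ (t : DBTree V) (r : Option (Sentence V)), (leafLabels r t).card ≤ numLeaves t
  | .leaf, r => by simp [leafLabels, numLeaves]
  | .node β t₁ t₂, r => by
      simp only [leafLabels, numLeaves]
      exact (Finset.card_union_le _ _).trans
        (add_le_add (card_leafLabels_le t₁ _) (card_leafLabels_le t₂ _))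

def fstC : Sentence V → Sentence V
  | .conj a _ => a
  | s => s

def fstIter : ℕ → Sentence V → Sentence V
  | 0, s => s
  | k+1, s => fstC (fstIter k s)

theorem neg_ne : ∀ s : Sentence V, Sentence.neg s ≠ s
  | .var _ => by simp
  | .bot => by simp
  | .neg s => by simpa using neg_ne s
  | .conj _ _ => by simp
  | .disj _ _ => by simp

theorem leafLabels_isSome [DecidableEq V] :
    ∀ (t : DBTree V) (γ : Sentence V) (α : Option (Sentence V)),
      α ∈ leafLabels (some γ) t → ∃ s, α = some s
  | .leaf, γ, α, h => by
      simp [leafLabels] at h; exact ⟨γ, h⟩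
  | .node β t₁ t₂, γ, α, h => by
      simp only [leafLabels, Finset.mem_union] at h
      rcases h with h | h
      · exact leafLabels_isSome t₁ _ α h
      · exact leafLabels_isSome t₂ _ α h

theorem fstIter_leaf [DecidableEq V] : ∀ {k : ℕ} {t : DBTree V}, IsFull k t →
    ∀ (γ s : Sentence V), some s ∈ leafLabels (some γ) t → fstIter k s = γ := by
  intro k t h
  induction h with
  | leaf =>
      intro γ s hs
      simp [leafLabels] at hs
      simp [fstIter, hs]
  | node β h1 h2 ih1 ih2 =>
      intro γ s hs
      simp only [leafLabels, Finset.mem_union] at hs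
      rcases hs with hs | hs
      · have := ih1 _ _ hs
        simp [fstIter, this, fstC]
      · have := ih2 _ _ hs
        simp [fstIter, this, fstC]

theorem card_leafLabels_full [DecidableEq V] : ∀ {k : ℕ} {t : DBTree V}, IsFull k t →
    ∀ r : Option (Sentence V), (leafLabels r t).card = 2^k := by
  intro k t h
  induction h with
  | leaf => intro r; simp [leafLabels]
  | @node k t₁ t₂ β h1 h2 ih1 ih2 =>
      intro r
      have hdisj : Disjoint (leafLabels (extend r β) t₁) (leafLabels (extend r (.neg β)) t₂) := by
        rw [Finset.disjoint_left]
        intro α hα1 hα2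
        obtain ⟨s, rfl⟩ : ∃ s, α = some s := by
          cases r with
          | none => exact leafLabels_isSome t₁ β α hα1
          | some a => exact leafLabels_isSome t₁ _ α hα1
        cases r with
        | none =>
            have e1 : fstIter k s = β := fstIter_leaf h1 _ _ hα1
            have e2 : fstIter k s = .neg β := fstIter_leaf h2 _ _ hα2
            rw [e1] at e2
            exact neg_ne β e2.symm
        | some a =>
            have e1 : fstIter k s = .conj a β := fstIter_leaf h1 _ _ hα1
            have e2 : fstIter k s = .conj a (.neg β) := fstIter_leaf h2 _ _ hα2
            rw [e1] at e2
            have : Sentence.neg β = β := by injection e2.symm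
            exact neg_ne β this
      show (leafLabels (extend r β) t₁ ∪ leafLabels (extend r (.neg β)) t₂).card = 2^(k+1)
      rw [Finset.card_union_of_disjoint hdisj, ih1, ih2]
      ring

/-- Soundness of `Der0`. -/
theorem der0_sound {Γ : Set (Sentence V)} {φ : Sentence V} (h : Der0 Γ φ) : CC Γ φ := by
  induction h with
  | prem h => exact fun v hv => hv _ h
  | andI _ _ ih1 ih2 =>
      intro v hv; have a := ih1 v hv; have b := ih2 v hv; simp [eval] at *; exact ⟨a, b⟩
  | andE1 _ ih => intro v hv; have a := ih v hv; simp [eval] at a; exact a.1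
  | andE2 _ ih => intro v hv; have a := ih v hv; simp [eval] at a; exact a.2
  | orI1 _ ih => intro v hv; have a := ih v hv; simp [eval]; exact Or.inl a
  | orI2 _ ih => intro v hv; have a := ih v hv; simp [eval]; exact Or.inr a
  | orE1 _ _ ih1 ih2 =>
      intro v hv; have a := ih1 v hv; have b := ih2 v hv; simp [eval] at *; simp_all
  | orE2 _ _ ih1 ih2 =>
      intro v hv; have a := ih1 v hv; have b := ih2 v hv; simp [eval] at *; simp_all
  | negAndI1 _ ih => intro v hv; have a := ih v hv; simp [eval] at *; simp_all
  | negAndI2 _ ih => intro v hv; have a := ih v hv; simp [eval] at *; simp_all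
  | negAndE1 _ _ ih1 ih2 =>
      intro v hv; have a := ih1 v hv; have b := ih2 v hv; simp [eval] at *; simp_all
  | negAndE2 _ _ ih1 ih2 =>
      intro v hv; have a := ih1 v hv; have b := ih2 v hv; simp [eval] at *; simp_all
  | negOrI _ _ ih1 ih2 =>
      intro v hv; have a := ih1 v hv; have b := ih2 v hv; simp [eval] at *; simp_all
  | negOrE1 _ ih => intro v hv; have a := ih v hv; simp [eval] at *; simp_all
  | negOrE2 _ ih => intro v hv; have a := ih v hv; simp [eval] at *; simp_all
  | dnI _ ih => intro v hv; have a := ih v hv; simp [eval] at *; simp_all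
  | dnE _ ih => intro v hv; have a := ih v hv; simp [eval] at *; simp_all
  | botI _ _ ih1 ih2 =>
      intro v hv; have a := ih1 v hv; have b := ih2 v hv; simp [eval] at *; simp_all
  | botE _ ih => intro v hv; have a := ih v hv; simp [eval] at a

/-- Soundness of `DerK`. -/
theorem derK_sound : ∀ (k : ℕ) {Γ : Set (Sentence V)} {φ : Sentence V},
    DerK k Γ φ → CC Γ φ
  | 0, _, _, h => der0_sound h
  | k+1, Γ, φ, ⟨β, _, h1, h2⟩ => by
      intro v hv
      by_cases hβ : eval v β = true
      · refine derK_sound k h1 v ?_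
        rintro γ (rfl | hγ)
        · exact hβ
        · exact hv _ hγ
      · refine derK_sound k h2 v ?_
        rintro γ (rfl | hγ)
        · simp [eval]; simpa using hβ
        · exact hv _ hγ

theorem leaf_entails_root [DecidableEq V] :
    ∀ (t : DBTree V) (r α : Option (Sentence V)), α ∈ leafLabels r t →
      ∀ v : V → Bool, (∀ γ ∈ prems α, eval v γ = true) → ∀ γ ∈ prems r, eval v γ = true
  | .leaf, r, α, h => by
      simp [leafLabels] at h
      subst h
      exact fun v hv => hv
  | .node β t₁ t₂, r, α, h => by
      simp only [leafLabels, Finset.mem_union] at h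
      intro v hα
      have key : ∀ (β' : Sentence V), (∀ γ ∈ prems (extend r β'), eval v γ = true) →
          ∀ γ ∈ prems r, eval v γ = true := by
        intro β' hc γ hγ
        cases r with
        | none => exact absurd hγ (by simp [prems])
        | some a =>
            have h1 : eval v (.conj a β') = true := hc _ rfl
            have hγa : γ = a := hγ
            subst hγa
            simp [eval] at h1
            exact h1.1
      rcases h with h | h
      · exact key β (leaf_entails_root t₁ _ α h v hα)
      · exact key (.neg β) (leaf_entails_root t₂ _ α h v hα)

theorem subsSet_singleton (a : Sentence V) : subsSet ({a} : Set (Sentence V)) = subs a := by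
  simp [subsSet]

theorem to_extend {k : ℕ} {r : Option (Sentence V)} {β ψ : Sentence V}
    (h : DerK k (insert β (prems r)) ψ) : DerK k (prems (extend r β)) ψ := by
  cases r with
  | none =>
      refine derK_transport k h ?_ ?_
      · rintro γ (rfl | hγ)
        · exact .prem rfl
        · exact absurd hγ (by simp [prems])
      · rw [subsSet_insert]
        show subs β ∪ subsSet (∅ : Set (Sentence V)) ⊆ subsSet {β}
        rw [subsSet_singleton]
        simp [subsSet]
  | some a =>
      refine derK_transport k h ?_ ?_
      · rintro γ (rfl | hγ)
        · exact .andE2 (φ := a) (.prem rfl)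
        · have : γ = a := hγ
          subst this
          exact .andE1 (ψ := β) (.prem rfl)
      · rw [subsSet_insert]
        show subs β ∪ subsSet {a} ⊆ subsSet {Sentence.conj a β}
        rw [subsSet_singleton, subsSet_singleton]
        intro x hx
        show x ∈ subs (Sentence.conj a β)
        rcases hx with hx | hx
        · exact Set.mem_insert_iff.mpr (Or.inr (Or.inr hx))
        · exact Set.mem_insert_iff.mpr (Or.inr (Or.inl hx))

theorem exists_full_tree [DecidableEq V] : ∀ (k : ℕ) (r : Option (Sentence V)) (ψ : Sentence V),
    DerK k (prems r) ψ → ∃ t : DBTree V, IsFull k t ∧ IsDepthKTree k t ∧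
      ∀ α ∈ leafLabels r t, Der0O α ψ
  | 0, r, ψ, h => ⟨.leaf, .leaf, isDepthK_leaf, by
      intro α hα
      simp [leafLabels] at hα
      subst hα
      exact h⟩
  | k+1, r, ψ, ⟨β, _, h1, h2⟩ => by
      obtain ⟨t₁, f1, d1, L1⟩ := exists_full_tree k (extend r β) ψ (to_extend h1)
      obtain ⟨t₂, f2, d2, L2⟩ := exists_full_tree k (extend r (.neg β)) ψ (to_extend h2)
      refine ⟨.node β t₁ t₂, .node β f1 f2, isDepthK_node β d1 d2, ?_⟩
      intro α hα
      simp only [leafLabels, Finset.mem_union] at hα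
      rcases hα with hα | hα
      · exact L1 α hα
      · exact L2 α hα

theorem decCount_le_card [DecidableEq V] (Γ : Finset (Option (Sentence V))) (ψ : Sentence V) :
    decCount Γ ψ ≤ Γ.card := by
  classical
  unfold decCount
  exact Finset.card_filter_le _ _

theorem decCount_eq_card [DecidableEq V] {Γ : Finset (Option (Sentence V))} {ψ : Sentence V}
    (h : ∀ α ∈ Γ, Der0O α ψ) : decCount Γ ψ = Γ.card := by
  classical
  unfold decCount
  have h' : ∀ α ∈ Γ, Decides α ψ := fun α hα => Or.inl (h α hα)
  rw [Finset.filter_true_of_mem h']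

theorem all_decides_of_card_le [DecidableEq V] {Γ : Finset (Option (Sentence V))} {ψ : Sentence V}
    (h : Γ.card ≤ decCount Γ ψ) : ∀ α ∈ Γ, Decides α ψ := by
  classical
  unfold decCount at h
  have heq := Finset.eq_of_subset_of_card_le (Finset.filter_subset _ Γ) h
  intro α hα
  rw [← heq] at hα
  exact (Finset.mem_filter.mp hα).2

end Aux

/-- If `φ ⊢ₖ ψ`, then for every `{ψ}`-maximal tree `T_k` of depth `k` rooted in
`φ` which is free of deep contradictions, every leaf `α ∈ Le(T_k)` satisfies `α ⊢₀ ψ`. -/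
theorem maximal_tree_leaves_derive {V : Type} [DecidableEq V] [Fintype V]
    (k : ℕ) (φ : Option (Sentence V)) (ψ : Sentence V) (h : DerKO k φ ψ)
    (t : DBTree V) (ht : IsDepthKTree k t)
    (hmax : TreeMaximal φ k t ψ) (hfree : TreeFreeDC φ t) :
    ∀ α ∈ leafLabels φ t, Der0O α ψ := by
  classical
  obtain ⟨t', hfull, hdk, hleaf⟩ := exists_full_tree k φ ψ h
  have hcard' : (leafLabels φ t').card = 2^k := card_leafLabels_full hfull φ
  have hdec' : decCount (leafLabels φ t') ψ = 2^k := by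
    rw [decCount_eq_card hleaf]
    exact hcard'
  have h1 : 2^k ≤ decCount (leafLabels φ t) ψ := hdec' ▸ hmax t' hdk
  have h2 : decCount (leafLabels φ t) ψ ≤ (leafLabels φ t).card := decCount_le_card _ _
  have h3 : (leafLabels φ t).card ≤ 2^k := by
    obtain ⟨S, hS⟩ := ht
    subst hS
    exact (card_leafLabels_le _ _).trans (seq_numLeaves S k)
  have hdecides : ∀ α ∈ leafLabels φ t, Decides α ψ :=
    all_decides_of_card_le (by omega)
  intro α hα
  rcases hdecides α hα with hpos | hneg
  · exact hpos
  · have hccbot : CCO α Sentence.bot := by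
      intro v hv
      have hroot := leaf_entails_root t φ α hα v hv
      have hψ : eval v ψ = true := derK_sound k h v hroot
      have hnψ : eval v (Sentence.neg ψ) = true := der0_sound hneg v hv
      simp [eval, hψ] at hnψ
    exact Der0.botE (hfree α hα hccbot)

end DBB
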